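/- arXiv:2209.03251 — 6 statements merged into one kernel-verified Lean document; each statement's English description precedes it below -/
import Mathlib

section
/- Let F be a field, let n ≥ 2, and let ω_1, …, ω_n be pairwise distinct elements of F. For each i set λ_i = (∏_{j≠i} (ω_i − ω_j))^{-1}. Then for every integer k with 1 ≤ k ≤ n and all polynomials f, r ∈ F[x] with deg f ≤ k − 1 and deg r ≤ n − k − 1, one has ∑_{i=1}^n λ_i · f(ω_i) · r(ω_i) = 0. (Equivalently, the vectors (λ_1 r(ω_1), …, λ_n r(ω_n)) with deg r ≤ n − k − 1 are orthogonal to the Reed–Solomon code RS({ω_1,…,ω_n}, k), i.e., the dual of a Reed–Solomon code is a generalized Reed–Solomon code with multipliers λ_i.) -/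
open Finset Polynomial

/-! The sum `∑ᵢ P(ωᵢ) / ∏_{j ≠ i} (ωᵢ - ωⱼ)` is the coefficient of `X ^ (n - 1)` in the Lagrange
interpolant of `P` at the `n` nodes, which is `P` itself when `deg P < n`. Applied to `P = f * r`,
whose degree is at most `n - 2`, this coefficient vanishes. -/

theorem Polynomial.degree_mul_lt_of_lt {R : Type*} [Semiring R] {p q : R[X]} {a b : ℕ}
    (hp : p.degree < a) (hq : q.degree < b) : (p * q).degree < ↑(a + b - 1) := by
  rcases eq_or_ne p 0 with rfl | hp0
  · simp
  rcases eq_or_ne q 0 with rfl | hq0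
  · simp
  have hpa : p.natDegree < a := (natDegree_lt_iff_degree_lt hp0).mpr hp
  have hqb : q.natDegree < b := (natDegree_lt_iff_degree_lt hq0).mpr hq
  calc (p * q).degree ≤ ↑(p.natDegree + q.natDegree) :=
        degree_mul_le_of_le degree_le_natDegree degree_le_natDegree
    _ < ↑(a + b - 1) := by exact_mod_cast (by omega : p.natDegree + q.natDegree < a + b - 1)

theorem Lagrange.sum_eval_div_prod_sub_eq_zero {F ι : Type*} [Field F] [DecidableEq ι]
    {s : Finset ι} {v : ι → F} (hvs : Set.InjOn v s) {P : F[X]} (hP : P.degree < ↑(#s - 1)) :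
    ∑ i ∈ s, P.eval (v i) / ∏ j ∈ s.erase i, (v i - v j) = 0 := by
  have hP' : P.degree < #s := hP.trans_le (by exact_mod_cast Nat.sub_le _ _)
  rw [← Lagrange.coeff_eq_sum hvs hP']
  exact coeff_eq_zero_of_degree_lt hP

theorem dual_of_RS_is_GRS_general {F : Type*} [Field F] (n : ℕ)
    (ω : Fin n → F) (hω : Function.Injective ω)
    (k : ℕ) (hkn : k ≤ n)
    (f r : Polynomial F)
    (hf : f.degree < (k : WithBot ℕ))
    (hr : r.degree < ((n - k : ℕ) : WithBot ℕ)) :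
    ∑ i : Fin n,
      (∏ j ∈ Finset.univ.erase i, (ω i - ω j))⁻¹ * f.eval (ω i) * r.eval (ω i) = 0 := by
  have hfr : (f * r).degree < ↑(#(univ : Finset (Fin n)) - 1) := by
    simpa [show k + (n - k) = n by omega] using degree_mul_lt_of_lt hf hr
  calc ∑ i : Fin n, (∏ j ∈ univ.erase i, (ω i - ω j))⁻¹ * f.eval (ω i) * r.eval (ω i)
      = ∑ i : Fin n, (f * r).eval (ω i) / ∏ j ∈ univ.erase i, (ω i - ω j) :=
        sum_congr rfl fun i _ => by rw [eval_mul]; ring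
    _ = 0 := Lagrange.sum_eval_div_prod_sub_eq_zero hω.injOn hfr

/-- The dual of a Reed–Solomon code is a generalized Reed–Solomon code:
for pairwise distinct evaluation points `ω 1, …, ω n`, multipliers
`λ i = (∏_{j ≠ i} (ω i - ω j))⁻¹`, every `f` of degree `≤ k - 1` and every
`r` of degree `≤ n - k - 1`, we have `∑ i, λ i * f (ω i) * r (ω i) = 0`. -/
theorem dual_of_RS_is_GRS {F : Type*} [Field F] (n : ℕ) (hn : 2 ≤ n)
    (ω : Fin n → F) (hω : Function.Injective ω)
    (k : ℕ) (hk1 : 1 ≤ k) (hkn : k ≤ n)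
    (f r : Polynomial F)
    (hf : f.degree < (k : WithBot ℕ))
    (hr : r.degree < ((n - k : ℕ) : WithBot ℕ)) :
    ∑ i : Fin n,
      (∏ j ∈ Finset.univ.erase i, (ω i - ω j))⁻¹ * f.eval (ω i) * r.eval (ω i) = 0 :=
  dual_of_RS_is_GRS_general n ω hω k hkn f r hf hr
end

section
/- Let B be a finite field with q = |B| elements and let F be a field extension of B of degree t, with trace map Tr : F → B, Tr(x) = ∑_{i=0}^{t−1} x^{q^i}. Let ℓ, d, k be positive integers with ℓ ≤ k ≤ ℓ + d and d ≥ ℓ·q^{t−1} − ℓ + k. Let β_1, …, β_ℓ, α_1, …, α_d be ℓ + d pairwise distinct elements of F and let κ_1, …, κ_ℓ ∈ F be nonzero. For each point ω among these n = ℓ + d points, let λ(ω) = (∏_{ω' ≠ ω} (ω − ω'))^{-1}, the product running over the other n − 1 points. Define g(x) = ∑_{j=1}^ℓ (κ_j / λ(β_j)) · ∏_{m≠j}(x − β_m) / ∏_{m≠j}(β_j − β_m). Then for every polynomial f ∈ F[x] with deg f ≤ k − 1 and every u ∈ F: Tr(u · ∑_{j=1}^ℓ κ_j f(β_j)) = −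 ∑_{j=1}^d Tr(u · ∏_{m=1}^ℓ (α_j − β_m)) · Tr( g(α_j) · λ(α_j) · f(α_j) / ∏_{m=1}^ℓ (α_j − β_m) ). -/
/-!
Put `π = ∏ₘ (X - β m)`. Since `Tr (u π) = ∑ᵢ u^{qⁱ} π^{qⁱ}`, the polynomial
`T = ∑ᵢ u^{qⁱ} π^{qⁱ - 1}` satisfies `π T = Tr (u π)` pointwise and `T (β j) = u`.
With `g` the interpolant of `κ j / λ (β j)` at the `β j`, the polynomial `h = T g f` has degree
at most `ℓ (q^{t-1} - 1) + (ℓ - 1) + (k - 1) < ℓ + d - 1`, so it lies in the dual of the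
Reed–Solomon code: `∑_ω λ(ω) h(ω) = 0`. The `β`-terms add up to `u ∑ κ j f(β j)`, the
`α`-terms are `Tr (u π(α j)) · g(α j) λ(α j) f(α j) / π(α j)`. Applying the `B`-linear trace,
the `B`-valued factors `Tr (u π(α j))` come out, giving the identity.
-/

open Finset Polynomial

/-- The trace polynomial map `x ↦ ∑_{i=0}^{t-1} x^{q^i}` (viewed as a map `F → F`). -/
noncomputable def traceFun {F : Type*} [Field F] (q t : ℕ) (x : F) : F :=
  ∑ i ∈ Finset.range t, x ^ q ^ i

/-- The dual-GRS multiplier `λ(ω) = (∏_{ω' ≠ ω} (ω - ω'))⁻¹` attached to each of the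
`ℓ + d` evaluation points `β 1, …, β ℓ, α 1, …, α d` (indexed by `Fin ℓ ⊕ Fin d`). -/
noncomputable def lamPt {F : Type*} [Field F] {ℓ d : ℕ}
    (β : Fin ℓ → F) (α : Fin d → F) (i : Fin ℓ ⊕ Fin d) : F :=
  (∏ j ∈ Finset.univ.erase i, (Sum.elim β α i - Sum.elim β α j))⁻¹

/-- The polynomial map `g(x) = ∑_j (κ_j / λ(β_j)) ∏_{m ≠ j}(x - β_m) / ∏_{m ≠ j}(β_j - β_m)`. -/
noncomputable def gFun {F : Type*} [Field F] {ℓ d : ℕ}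
    (β : Fin ℓ → F) (α : Fin d → F) (κ : Fin ℓ → F) (x : F) : F :=
  ∑ j : Fin ℓ, (κ j / lamPt β α (Sum.inl j)) *
    (∏ m ∈ Finset.univ.erase j, (x - β m)) / (∏ m ∈ Finset.univ.erase j, (β j - β m))

lemma Polynomial.natDegree_le_sub_one_of_degree_lt {R : Type*} [Semiring R] {p : R[X]} {n : ℕ}
    (hp : p.degree < n) : p.natDegree ≤ n - 1 := by
  rcases eq_or_ne p 0 with rfl | hp0
  · simp
  · have := (natDegree_lt_iff_degree_lt hp0).2 hp
    omega

section TraceQuotient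

variable {F : Type*} [Field F]

noncomputable def traceQuotient (q t : ℕ) (u : F) (π : F[X]) : F[X] :=
  ∑ i ∈ range t, C (u ^ q ^ i) * π ^ (q ^ i - 1)

variable {q : ℕ} (t : ℕ) (u : F) (π : F[X])

lemma eval_mul_eval_traceQuotient (hq : 0 < q) (x : F) :
    π.eval x * (traceQuotient q t u π).eval x = traceFun q t (u * π.eval x) := by
  simp only [traceQuotient, traceFun, eval_finsetSum, eval_mul, eval_C, eval_pow, mul_sum]
  refine sum_congr rfl fun i _ => ?_
  rw [mul_pow, mul_left_comm, ← pow_succ', Nat.sub_add_cancel (Nat.one_le_pow _ _ hq)]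

lemma eval_traceQuotient_of_isRoot (hq : 2 ≤ q) (ht : 0 < t) {x : F} (hx : π.IsRoot x) :
    (traceQuotient q t u π).eval x = u := by
  rw [traceQuotient, eval_finsetSum, sum_eq_single_of_mem 0 (mem_range.2 ht)]
  · simp
  · intro i _ hi
    have : q ^ i - 1 ≠ 0 := by
      have := Nat.le_self_pow hi q
      omega
    rw [eval_mul, eval_pow, hx.eq_zero, zero_pow this, mul_zero]

lemma natDegree_traceQuotient_le (hq : 0 < q) :
    (traceQuotient q t u π).natDegree ≤ (q ^ (t - 1) - 1) * π.natDegree := by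
  refine natDegree_sum_le_of_forall_le _ _ fun i hi => ?_
  refine (natDegree_C_mul_le _ _).trans (natDegree_pow_le.trans ?_)
  gcongr
  exact Nat.le_sub_one_of_lt (mem_range.1 hi)

lemma degree_traceQuotient_mul_mul_lt {ℓ d k : ℕ} (hq : 0 < q) (hℓ : 0 < ℓ) (hk : 0 < k)
    (hdbig : ℓ * q ^ (t - 1) - ℓ + k ≤ d) (hπ : π.natDegree = ℓ) {g f : F[X]}
    (hg : g.degree < ℓ) (hf : f.degree < k) :
    (traceQuotient q t u π * g * f).degree < ↑(ℓ + d - 1) := by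
  have hT := natDegree_traceQuotient_le t u π hq
  have hg' := natDegree_le_sub_one_of_degree_lt hg
  have hf' := natDegree_le_sub_one_of_degree_lt hf
  have hY : ℓ ≤ ℓ * q ^ (t - 1) := Nat.le_mul_of_pos_right ℓ (by positivity)
  have h1 : (traceQuotient q t u π * g * f).natDegree ≤
      (traceQuotient q t u π * g).natDegree + f.natDegree := natDegree_mul_le
  have h2 : (traceQuotient q t u π * g).natDegree ≤
      (traceQuotient q t u π).natDegree + g.natDegree := natDegree_mul_le
  rw [hπ, Nat.sub_one_mul, mul_comm] at hT
  generalize ℓ * q ^ (t - 1) = Y at hT hY hdbig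
  exact degree_le_natDegree.trans_lt (by exact_mod_cast (by omega : _ < ℓ + d - 1))

end TraceQuotient

section DualCode

variable {F : Type*} [Field F] {ℓ d : ℕ} (β : Fin ℓ → F) (α : Fin d → F)

lemma lamPt_eq_nodalWeight (i : Fin ℓ ⊕ Fin d) :
    lamPt β α i = Lagrange.nodalWeight univ (Sum.elim β α) i := by
  rw [lamPt, Lagrange.nodalWeight, prod_inv_distrib]

lemma sum_lamPt_mul_eval_eq_zero (hinj : Function.Injective (Sum.elim β α)) {P : F[X]}
    (hP : P.degree < ↑(ℓ + d - 1)) :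
    ∑ i, lamPt β α i * P.eval (Sum.elim β α i) = 0 := by
  have hcard : #(univ : Finset (Fin ℓ ⊕ Fin d)) = ℓ + d := by simp
  rw [← hcard] at hP
  simpa only [lamPt, inv_mul_eq_div] using
    Lagrange.sum_eval_div_prod_sub_eq_zero hinj.injOn hP

lemma gFun_eq_eval_interpolate (κ : Fin ℓ → F) (x : F) :
    gFun β α κ x =
      (Lagrange.interpolate univ β fun j => κ j / lamPt β α (Sum.inl j)).eval x := by
  simp only [gFun, Lagrange.interpolate_apply, Lagrange.basis, Lagrange.basisDivisor,
    eval_finsetSum, eval_mul, eval_C, eval_prod, eval_sub, eval_X, prod_mul_distrib,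
    prod_inv_distrib]
  refine sum_congr rfl fun j _ => ?_
  ring

end DualCode

lemma traceFun_card_finrank_eq_algebraMap_trace {B F : Type*} [Field B] [Fintype B] [Field F]
    [Algebra B F] [Finite F] (x : F) :
    traceFun (Fintype.card B) (Module.finrank B F) x = algebraMap B F (Algebra.trace B F x) := by
  rw [FiniteField.algebraMap_trace_eq_sum_pow, Nat.card_eq_fintype_card, traceFun]

theorem mul_sum_eval_eq_neg_sum_traceFun_mul {F : Type*} [Field F] {q t ℓ d k : ℕ}
    (hq : 2 ≤ q) (ht : 0 < t) (hℓ : 0 < ℓ) (hk : 0 < k) (hdbig : ℓ * q ^ (t - 1) - ℓ + k ≤ d)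
    (β : Fin ℓ → F) (α : Fin d → F) (hinj : Function.Injective (Sum.elim β α))
    (κ : Fin ℓ → F) {f : F[X]} (hf : f.degree < k) (u : F) :
    u * ∑ j, κ j * f.eval (β j) =
      - ∑ j : Fin d, traceFun q t (u * ∏ m, (α j - β m)) *
          (gFun β α κ (α j) * lamPt β α (Sum.inr j) * f.eval (α j) / ∏ m, (α j - β m)) := by
  set π := Lagrange.nodal univ β
  set g := Lagrange.interpolate univ β fun j => κ j / lamPt β α (Sum.inl j)
  set h := traceQuotient q t u π * g * f
  have hβ : Set.InjOn β (univ : Finset (Fin ℓ)) := (hinj.comp Sum.inl_injective).injOn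
  have hπ : π.natDegree = ℓ := by simp [π, Lagrange.natDegree_nodal]
  have hg : g.degree < ℓ := by
    rw [← Fintype.card_fin ℓ, ← card_univ]
    exact Lagrange.degree_interpolate_lt _ hβ
  have hdeg : h.degree < ↑(ℓ + d - 1) :=
    degree_traceQuotient_mul_mul_lt t u π (by omega) hℓ hk hdbig hπ hg hf
  have hβterm : ∀ j, lamPt β α (Sum.inl j) * h.eval (β j) = u * (κ j * f.eval (β j)) := by
    intro j
    have hlam : lamPt β α (Sum.inl j) ≠ 0 := by
      rw [lamPt_eq_nodalWeight]
      exact Lagrange.nodalWeight_ne_zero hinj.injOn (mem_univ _)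
    have hπβ : π.IsRoot (β j) := Lagrange.eval_nodal_at_node (mem_univ j)
    simp only [h, eval_mul, eval_traceQuotient_of_isRoot t u π hq ht hπβ, g,
      Lagrange.eval_interpolate_at_node _ hβ (mem_univ j)]
    field_simp
  have hαterm : ∀ j, lamPt β α (Sum.inr j) * h.eval (α j) =
      traceFun q t (u * ∏ m, (α j - β m)) *
        (gFun β α κ (α j) * lamPt β α (Sum.inr j) * f.eval (α j) / ∏ m, (α j - β m)) := by
    intro j
    have hπα : π.eval (α j) ≠ 0 := by
      rw [Lagrange.eval_nodal, prod_ne_zero_iff]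
      exact fun m _ => sub_ne_zero.2 fun he => Sum.inr_ne_inl (hinj (a₁ := .inr j) he)
    have hT := eval_mul_eval_traceQuotient t u π (by omega : 0 < q) (α j)
    rw [Lagrange.eval_nodal] at hT hπα
    simp only [h, eval_mul, g, ← gFun_eq_eval_interpolate, ← hT]
    field_simp
  have hdual := sum_lamPt_mul_eval_eq_zero β α hinj hdeg
  simp only [Fintype.sum_sum_type, Sum.elim_inl, Sum.elim_inr, hβterm, hαterm, ← mul_sum] at hdual
  exact eq_neg_of_add_eq_zero_left hdual

theorem scheme1_trace_identity_general {B F : Type*} [Field B] [Fintype B] [Field F] [Algebra B F]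
    (t : ℕ) (ht : Module.finrank B F = t)
    (ℓ d k : ℕ) (hℓ : 0 < ℓ) (hk : 0 < k)
    (hdbig : ℓ * Fintype.card B ^ (t - 1) - ℓ + k ≤ d)
    (β : Fin ℓ → F) (α : Fin d → F)
    (hinj : Function.Injective (Sum.elim β α))
    (κ : Fin ℓ → F)
    (f : Polynomial F) (hf : f.degree < (k : WithBot ℕ)) (u : F) :
    traceFun (Fintype.card B) t (u * ∑ j, κ j * f.eval (β j)) =
      - ∑ j : Fin d,
          traceFun (Fintype.card B) t (u * ∏ m, (α j - β m)) *
          traceFun (Fintype.card B) t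
            (gFun β α κ (α j) * lamPt β α (Sum.inr j) * f.eval (α j) /
              ∏ m, (α j - β m)) := by
  rcases Nat.eq_zero_or_pos t with rfl | htpos
  · simp [traceFun]
  have : Module.Finite B F := Module.finite_of_finrank_pos (ht ▸ htpos)
  have : Finite F := Module.finite_of_finite B
  rw [mul_sum_eval_eq_neg_sum_traceFun_mul Fintype.one_lt_card htpos hℓ hk hdbig β α hinj κ hf u]
  subst ht
  simp only [traceFun_card_finrank_eq_algebraMap_trace, ← Algebra.smul_def, map_neg, map_sum,
    map_smul, smul_eq_mul, map_mul]

/-- Correctness of Scheme 1 (trace-polynomial based evaluation of a weighted sum of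
Reed–Solomon coded symbols): for all `f` with `deg f ≤ k - 1` and all `u ∈ F`,
`Tr(u ∑_j κ_j f(β_j)) = - ∑_j Tr(u ∏_m (α_j - β_m)) Tr(g(α_j) λ(α_j) f(α_j) / ∏_m (α_j - β_m))`. -/
theorem scheme1_trace_identity {B F : Type*} [Field B] [Fintype B] [Field F] [Algebra B F]
    (t : ℕ) (ht : Module.finrank B F = t)
    (ℓ d k : ℕ) (hℓ : 0 < ℓ) (hd : 0 < d) (hk : 0 < k)
    (hℓk : ℓ ≤ k) (hkℓd : k ≤ ℓ + d)
    (hdbig : ℓ * Fintype.card B ^ (t - 1) - ℓ + k ≤ d)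
    (β : Fin ℓ → F) (α : Fin d → F)
    (hinj : Function.Injective (Sum.elim β α))
    (κ : Fin ℓ → F) (hκ : ∀ i, κ i ≠ 0)
    (f : Polynomial F) (hf : f.degree < (k : WithBot ℕ)) (u : F) :
    traceFun (Fintype.card B) t (u * ∑ j, κ j * f.eval (β j)) =
      - ∑ j : Fin d,
          traceFun (Fintype.card B) t (u * ∏ m, (α j - β m)) *
          traceFun (Fintype.card B) t
            (gFun β α κ (α j) * lamPt β α (Sum.inr j) * f.eval (α j) /
              ∏ m, (α j - β m)) :=
  scheme1_trace_identity_general t ht ℓ d k hℓ hk hdbig β α hinj κ f hf u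
end

section
/- Let B be a finite field with q = |B| elements and let F be a field extension of B of degree t. Let β_1, …, β_ℓ, α_1, …, α_d be ℓ + d pairwise distinct elements of F, and let p_1, …, p_t ∈ F[x] be polynomials. For x = (x_1,…,x_t) ∈ B^t write p_x = x_1 p_1 + ⋯ + x_t p_t. Assume that for each i ∈ [ℓ], the t values p_1(β_i), …, p_t(β_i) are linearly independent over B. For j ∈ [d] let b_j = dim_B span_B{p_1(α_j), …, p_t(α_j)}. Then ∑_{x ∈ B^t ∖ {0}} #{ ω ∈ {β_1,…,β_ℓ, α_1,…,α_d} : p_x(ω) = 0 } = ∑_{j=1}^d ( q^{t − b_j} − 1 ). -/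
open Finset Polynomial

/-!
Swapping the order of summation, the left side counts, for each evaluation point `ω`, the nonzero
`x ∈ B^t` with `∑ x_m p_m(ω) = 0`, i.e. the nonzero vectors in the kernel of
`x ↦ ∑ x_m p_m(ω)`. By rank–nullity this kernel has `q^(t - b_ω)` elements, where `b_ω` is the rank
of `p_1(ω), …, p_t(ω)`; at the points `β_i` this rank is `t`, so they contribute nothing.
-/

section KernelCount

variable {K M ι : Type*} [Field K] [Fintype K] [AddCommGroup M] [Module K M]
  [Fintype ι] [DecidableEq ι]

theorem card_filter_linearCombination_eq_zero [DecidableEq M] (v : ι → M) :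
    #{x : ι → K | Fintype.linearCombination K v x = 0} =
      Fintype.card K ^ (Fintype.card ι - Module.finrank K (Submodule.span K (Set.range v))) := by
  classical
  set f := Fintype.linearCombination K v
  have rank_nullity := LinearMap.finrank_range_add_finrank_ker f
  rw [Fintype.range_linearCombination, Module.finrank_fintype_fun_eq_card] at rank_nullity
  calc #{x : ι → K | f x = 0}
      = Fintype.card (LinearMap.ker f) := by
        rw [Fintype.card_subtype]; simp only [LinearMap.mem_ker]
    _ = Fintype.card K ^ Module.finrank K (LinearMap.ker f) := Module.card_eq_pow_finrank
    _ = _ := by rw [Nat.eq_sub_of_add_eq' rank_nullity]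

theorem card_filter_ne_zero_linearCombination_eq_zero [DecidableEq K] [DecidableEq M]
    (v : ι → M) :
    #{x ∈ univ.filter (· ≠ (0 : ι → K)) | Fintype.linearCombination K v x = 0} =
      Fintype.card K ^ (Fintype.card ι - Module.finrank K (Submodule.span K (Set.range v))) - 1 := by
  rw [← card_filter_linearCombination_eq_zero v, ← card_erase_of_mem (a := 0) (by simp)]
  congr 1
  ext x
  simp

theorem card_filter_ne_zero_linearCombination_eq_zero_of_linearIndependent [DecidableEq K]
    [DecidableEq M] {v : ι → M} (hv : LinearIndependent K v) :
    #{x ∈ univ.filter (· ≠ (0 : ι → K)) | Fintype.linearCombination K v x = 0} = 0 := by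
  rw [card_filter_ne_zero_linearCombination_eq_zero, finrank_span_eq_card hv, Nat.sub_self,
    pow_zero, Nat.sub_self]

end KernelCount

theorem eval_sum_C_algebraMap_mul {B F ι : Type*} [CommSemiring B] [CommSemiring F]
    [Algebra B F] [Fintype ι] (p : ι → F[X]) (x : ι → B) (ω : F) :
    (∑ m, C (algebraMap B F (x m)) * p m).eval ω =
      Fintype.linearCombination B (fun m => (p m).eval ω) x := by
  simp [eval_finsetSum, Fintype.linearCombination_apply, Algebra.smul_def]

theorem omega_double_counting_general {B F : Type*} [Field B] [Fintype B] [DecidableEq B]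
    [Field F] [DecidableEq F] [Algebra B F]
    (t : ℕ)
    (ℓ d : ℕ)
    (β : Fin ℓ → F) (α : Fin d → F)
    (p : Fin t → Polynomial F)
    (hindep : ∀ i : Fin ℓ, LinearIndependent B (fun m : Fin t => (p m).eval (β i))) :
    ∑ x ∈ (Finset.univ : Finset (Fin t → B)).filter (· ≠ 0),
      ((Finset.univ.filter (fun ωi : Fin ℓ ⊕ Fin d =>
        (∑ m : Fin t, Polynomial.C (algebraMap B F (x m)) * p m).eval
          (Sum.elim β α ωi) = 0)).card)
    = ∑ j : Fin d,
        (Fintype.card B ^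
          (t - Module.finrank B
            (Submodule.span B (Set.range fun m : Fin t => (p m).eval (α j)))) - 1) := by
  simp_rw [eval_sum_C_algebraMap_mul]
  refine (sum_card_bipartiteAbove_eq_sum_card_bipartiteBelow
    (fun x ωi => Fintype.linearCombination B (fun m => (p m).eval (Sum.elim β α ωi)) x = 0)).trans ?_
  rw [Fintype.sum_sum_type, sum_eq_zero fun i _ => ?_, zero_add]
  · refine sum_congr rfl fun j _ => ?_
    exact (card_filter_ne_zero_linearCombination_eq_zero _).trans (by rw [Fintype.card_fin]; rfl)
  · exact card_filter_ne_zero_linearCombination_eq_zero_of_linearIndependent (hindep i)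

/-- The double-counting identity (Lemma 8): with `p_x = ∑_m x_m p_m` for `x ∈ B^t`,
if the values `p_1(β_i), …, p_t(β_i)` are `B`-linearly independent for each `i`, then
`∑_{x ∈ B^t ∖ {0}} #{ω ∈ {β_1,…,β_ℓ,α_1,…,α_d} : p_x(ω) = 0}
  = ∑_{j=1}^d (q^{t - b_j} - 1)`, where
`b_j = dim_B span_B {p_1(α_j),…,p_t(α_j)}` and `q = |B|`. -/
theorem omega_double_counting {B F : Type*} [Field B] [Fintype B] [DecidableEq B]
    [Field F] [DecidableEq F] [Algebra B F]
    (t : ℕ) (ht : Module.finrank B F = t)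
    (ℓ d : ℕ) (hℓ : 0 < ℓ) (hd : 0 < d)
    (β : Fin ℓ → F) (α : Fin d → F)
    (hinj : Function.Injective (Sum.elim β α))
    (p : Fin t → Polynomial F)
    (hindep : ∀ i : Fin ℓ, LinearIndependent B (fun m : Fin t => (p m).eval (β i))) :
    ∑ x ∈ (Finset.univ : Finset (Fin t → B)).filter (· ≠ 0),
      ((Finset.univ.filter (fun ωi : Fin ℓ ⊕ Fin d =>
        (∑ m : Fin t, Polynomial.C (algebraMap B F (x m)) * p m).eval
          (Sum.elim β α ωi) = 0)).card)
    = ∑ j : Fin d,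
        (Fintype.card B ^
          (t - Module.finrank B
            (Submodule.span B (Set.range fun m : Fin t => (p m).eval (α j)))) - 1) :=
  omega_double_counting_general t ℓ d β α p hindep
end

section
/- Let q ≥ 2 and t ≥ 1 be integers, d ≥ 1 an integer, and L a real number with d·q^{−t} ≤ L ≤ d and such that log_q(d/L) is not an integer. Set n_0 = ⌊ (L − d·q^{−⌈log_q(d/L)⌉}) / (q^{−⌊log_q(d/L)⌋} − q^{−⌈log_q(d/L)⌉}) ⌋. Then for any integers b_1, …, b_d ∈ {0, 1, …, t} satisfying ∑_{i=1}^d q^{−b_i} ≤ L, one has ∑_{i=1}^d b_i ≥ n_0 · ⌊log_q(d/L)⌋ + (d − n_0) · ⌈log_q(d/L)⌉. Moreover this bound is attained: the assignment b_1 = ⋯ = b_{n_0} = ⌊log_q(d/L)⌋ and b_{n_0+1} = ⋯ = b_d = ⌈log_q(d/L)⌉ is feasible. -/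
open Finset Real

/-!
On the integers, `k ↦ Q ^ (-k)` lies above its chord through `f` and `f + 1` (integer
Bernoulli inequality). With `f = ⌊log_q (d/L)⌋` and `f + 1 = ⌈log_q (d/L)⌉`, summing the chord
bound over the entries linearises the constraint:
`d q^{-(f+1)} + (d (f+1) - ∑ bᵢ)(q^{-f} - q^{-(f+1)}) ≤ L`, so `d (f+1) - ∑ bᵢ ≤ n₀`.
The assignment with `n₀` entries `f` and the others `f + 1` lies on the chord, hence is
feasible by the choice of `n₀`; `q^f ≤ d/L ≤ q^(f+1)` gives `0 ≤ n₀ ≤ d`.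
-/
section
variable {Q : ℝ}

theorem one_add_mul_sub_one_le_zpow (hQ : 0 < Q) (j : ℤ) : 1 + j * (Q - 1) ≤ Q ^ j := by
  obtain ⟨k, rfl | rfl⟩ := j.eq_nat_or_neg
  · simpa using one_add_mul_le_pow (a := Q - 1) (by linarith) k
  · -- Bernoulli for `Q⁻¹`, together with `Q + Q⁻¹ ≥ 2`
    have hinv : Q * Q⁻¹ = 1 := mul_inv_cancel₀ hQ.ne'
    have hbern := one_add_mul_le_pow (a := Q⁻¹ - 1) (by linarith [inv_pos.2 hQ]) k
    rw [add_sub_cancel, inv_pow] at hbern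
    rw [zpow_neg, zpow_natCast]
    push_cast
    nlinarith [sq_nonneg (Q - 1), inv_pos.2 hQ, Nat.cast_nonneg (α := ℝ) k]

theorem chord_le_zpow_neg (hQ : 0 < Q) (f m : ℤ) :
    Q ^ (-(f + 1)) + (f + 1 - m) * (Q ^ (-f) - Q ^ (-(f + 1))) ≤ Q ^ (-m) := by
  have hsplit : ∀ k : ℤ, Q ^ (-(f + 1) + k) = Q ^ (-(f + 1)) * Q ^ k := zpow_add₀ hQ.ne' _
  have h1 := hsplit 1
  have h2 := hsplit (f + 1 - m)
  rw [zpow_one, show -(f + 1) + 1 = -f by ring] at h1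
  rw [show -(f + 1) + (f + 1 - m) = -m by ring] at h2
  rw [h1, h2]
  have := mul_le_mul_of_nonneg_left (one_add_mul_sub_one_le_zpow hQ (f + 1 - m))
    (zpow_pos hQ (-(f + 1))).le
  push_cast at this
  linarith

/-- The `n₀` of the statement, for `⌊log_q (d/L)⌋ = f` and `⌈log_q (d/L)⌉ = f + 1`. -/
noncomputable def numFloorEntries (Q L : ℝ) (d : ℕ) (f : ℤ) : ℤ :=
  ⌊(L - d * Q ^ (-(f + 1))) / (Q ^ (-f) - Q ^ (-(f + 1)))⌋

theorem zpow_neg_sub_zpow_neg_add_one_pos (hQ : 1 < Q) (f : ℤ) :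
    0 < Q ^ (-f) - Q ^ (-(f + 1)) :=
  sub_pos.2 (zpow_lt_zpow_right₀ hQ (by omega))

theorem card_mul_add_one_sub_sum_le_numFloorEntries {ι : Type*} [Fintype ι] (hQ : 1 < Q)
    (f : ℤ) (b : ι → ℤ) {L : ℝ} (hb : ∑ i, Q ^ (-b i) ≤ L) :
    Fintype.card ι * (f + 1) - ∑ i, b i ≤ numFloorEntries Q L (Fintype.card ι) f := by
  refine Int.le_floor.2 ((le_div_iff₀ (zpow_neg_sub_zpow_neg_add_one_pos hQ f)).2 ?_)
  have hchord := Finset.sum_le_sum fun i (_ : i ∈ univ) ↦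
    chord_le_zpow_neg (zero_lt_one.trans hQ) f (b i)
  simp only [sum_add_distrib, ← sum_mul, sum_sub_distrib, sum_const, card_univ, nsmul_eq_mul]
    at hchord
  push_cast
  linarith

theorem numFloorEntries_nonneg (hQ : 1 < Q) {L : ℝ} {d : ℕ} {f : ℤ}
    (hL : d * Q ^ (-(f + 1)) ≤ L) : 0 ≤ numFloorEntries Q L d f :=
  Int.floor_nonneg.2 (div_nonneg (sub_nonneg.2 hL) (zpow_neg_sub_zpow_neg_add_one_pos hQ f).le)

theorem numFloorEntries_le (hQ : 1 < Q) {L : ℝ} {d : ℕ} {f : ℤ}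
    (hL : L ≤ d * Q ^ (-f)) : numFloorEntries Q L d f ≤ d := by
  have hle : (L - d * Q ^ (-(f + 1))) / (Q ^ (-f) - Q ^ (-(f + 1))) ≤ d := by
    rw [div_le_iff₀ (zpow_neg_sub_zpow_neg_add_one_pos hQ f), mul_sub]
    linarith
  exact (Int.floor_mono hle).trans_eq (Int.floor_natCast d)

end

theorem Fin.sum_ite_val_lt {M : Type*} [AddCommMonoid M] {d n : ℕ} (hn : n ≤ d) (A B : M) :
    ∑ i : Fin d, (if (i : ℕ) < n then A else B) = n • A + (d - n) • B := by
  rw [sum_ite, Finset.sum_const, Finset.sum_const, filter_not,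
    card_sdiff_of_subset (filter_subset _ _), Fin.card_filter_val_lt, min_eq_right hn, card_univ,
    Fintype.card_fin]

theorem exists_floor_ceil_assignment {Q L : ℝ} (hQ : 1 < Q) {d n t : ℕ} {f : ℤ} (hf : 0 ≤ f)
    (hft : f + 1 ≤ t) (hnd : n ≤ d) (hn : (n : ℤ) ≤ numFloorEntries Q L d f) :
    ∃ b : Fin d → ℕ, (∀ i, (b i : ℤ) = if (i : ℕ) < n then f else f + 1) ∧ (∀ i, b i ≤ t) ∧
      ∑ i, Q ^ (-(b i : ℤ)) ≤ L := by
  have hb_cast : ∀ i : Fin d, (((if (i : ℕ) < n then f else f + 1).toNat : ℕ) : ℤ) =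
      if (i : ℕ) < n then f else f + 1 :=
    fun i => Int.toNat_of_nonneg (by split_ifs <;> omega)
  refine ⟨fun i => (if (i : ℕ) < n then f else f + 1).toNat, hb_cast, fun i => ?_, ?_⟩
  · dsimp only
    split_ifs <;> omega
  have hmul := (le_div_iff₀ (zpow_neg_sub_zpow_neg_add_one_pos hQ f)).1 (Int.le_floor.1 hn)
  simp only [hb_cast]
  simp only [apply_ite, Fin.sum_ite_val_lt hnd, nsmul_eq_mul, Nat.cast_sub hnd]
  push_cast at hmul
  linarith

theorem div_le_zpow_iff_mul_zpow_neg_le {Q d L : ℝ} (hQ : 0 < Q) (hL : 0 < L) (k : ℤ) :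
    d / L ≤ Q ^ k ↔ d * Q ^ (-k) ≤ L := by
  rw [div_le_iff₀ hL, zpow_neg, ← div_eq_mul_inv, div_le_iff₀ (zpow_pos hQ k), mul_comm]

theorem zpow_le_div_iff_le_mul_zpow_neg {Q d L : ℝ} (hQ : 0 < Q) (hL : 0 < L) (k : ℤ) :
    Q ^ k ≤ d / L ↔ L ≤ d * Q ^ (-k) := by
  rw [le_div_iff₀ hL, zpow_neg, ← div_eq_mul_inv, le_div_iff₀ (zpow_pos hQ k), mul_comm]

theorem integral_bandwidth_bound_general (q t d : ℕ) (hq : 2 ≤ q)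
    (L : ℝ) (hL1 : (d : ℝ) * (q : ℝ) ^ (-(t : ℤ)) ≤ L) (hL2 : L ≤ d)
    (hnotint : ¬ ∃ z : ℤ, Real.logb q ((d : ℝ) / L) = z)
    (fl cl n₀ : ℤ)
    (hfl : fl = ⌊Real.logb q ((d : ℝ) / L)⌋)
    (hcl : cl = ⌈Real.logb q ((d : ℝ) / L)⌉)
    (hn₀ : n₀ = ⌊(L - (d : ℝ) * (q : ℝ) ^ (-cl)) /
      ((q : ℝ) ^ (-fl) - (q : ℝ) ^ (-cl))⌋) :
    (∀ b : Fin d → ℕ, (∀ i, b i ≤ t) →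
        (∑ i, (q : ℝ) ^ (-(b i : ℤ))) ≤ L →
        n₀ * fl + ((d : ℤ) - n₀) * cl ≤ ∑ i, (b i : ℤ)) ∧
    ∃ b : Fin d → ℕ,
      (∀ i : Fin d, (b i : ℤ) = if ((i : ℕ) : ℤ) < n₀ then fl else cl) ∧
      (∀ i, b i ≤ t) ∧
      (∑ i, (q : ℝ) ^ (-(b i : ℤ))) ≤ L := by
  have hq0 : (0 : ℝ) < q := by positivity
  have hq1 : (1 : ℝ) < q := by exact_mod_cast hq
  -- `L = 0` is excluded by `hnotint`, since `d / 0 = 0`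
  have hL0 : 0 < L :=
    (le_trans (by positivity) hL1).lt_of_ne' fun hL => hnotint ⟨0, by simp [hL]⟩
  have hdL : 0 < (d : ℝ) / L := div_pos (hL0.trans_le hL2) hL0
  have hcl_eq : cl = fl + 1 := by
    rw [hfl, hcl, Int.ceil_eq_floor_add_one_iff_notMem]
    exact fun ⟨z, hz⟩ => hnotint ⟨z, hz.symm⟩
  rw [floor_logb_natCast hdL.le] at hfl
  rw [ceil_logb_natCast hdL.le] at hcl
  have hLfl : L ≤ d * (q : ℝ) ^ (-fl) :=
    (zpow_le_div_iff_le_mul_zpow_neg hq0 hL0 fl).1 (hfl ▸ Int.zpow_log_le_self hq hdL)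
  have hLcl : d * (q : ℝ) ^ (-cl) ≤ L :=
    (div_le_zpow_iff_mul_zpow_neg_le hq0 hL0 cl).1 (hcl ▸ Int.self_le_zpow_clog hq _)
  have hfl0 : 0 ≤ fl :=
    hfl ▸ (Int.zpow_le_iff_le_log hq hdL).1 (by simpa [one_le_div hL0] using hL2)
  have hclt : cl ≤ t :=
    hcl ▸ (Int.le_zpow_iff_clog_le hq hdL).1 ((div_le_zpow_iff_mul_zpow_neg_le hq0 hL0 t).2 hL1)
  subst hcl_eq
  replace hn₀ : n₀ = numFloorEntries q L d fl := hn₀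
  lift n₀ to ℕ using hn₀ ▸ numFloorEntries_nonneg hq1 hLcl
  have hnd : n₀ ≤ d := by exact_mod_cast hn₀ ▸ numFloorEntries_le hq1 hLfl
  refine ⟨fun b _ hbL => ?_, ?_⟩
  · have hlower := card_mul_add_one_sub_sum_le_numFloorEntries hq1 fl (fun i => (b i : ℤ)) hbL
    rw [Fintype.card_fin, ← hn₀] at hlower
    linarith
  · obtain ⟨b, hb, hbt, hbL⟩ := exists_floor_ceil_assignment hq1 hfl0 hclt hnd hn₀.le
    exact ⟨b, fun i => by simp only [hb, Nat.cast_lt], hbt, hbL⟩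

/-- Exact solution of the integer program
`min { ∑ b_i : b_i ∈ {0,…,t}, ∑ q^{-b_i} ≤ L }`: with
`fl = ⌊log_q(d/L)⌋`, `cl = ⌈log_q(d/L)⌉` and
`n₀ = ⌊(L - d q^{-cl}) / (q^{-fl} - q^{-cl})⌋`, every feasible `b` satisfies
`∑ b_i ≥ n₀ fl + (d - n₀) cl`, and the assignment with `n₀` entries equal to `fl`
and the rest equal to `cl` is feasible and attains this value. -/
theorem integral_bandwidth_bound (q t d : ℕ) (hq : 2 ≤ q) (ht : 1 ≤ t) (hd : 1 ≤ d)
    (L : ℝ) (hL1 : (d : ℝ) * (q : ℝ) ^ (-(t : ℤ)) ≤ L) (hL2 : L ≤ d)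
    (hnotint : ¬ ∃ z : ℤ, Real.logb q ((d : ℝ) / L) = z)
    (fl cl n₀ : ℤ)
    (hfl : fl = ⌊Real.logb q ((d : ℝ) / L)⌋)
    (hcl : cl = ⌈Real.logb q ((d : ℝ) / L)⌉)
    (hn₀ : n₀ = ⌊(L - (d : ℝ) * (q : ℝ) ^ (-cl)) /
      ((q : ℝ) ^ (-fl) - (q : ℝ) ^ (-cl))⌋) :
    (∀ b : Fin d → ℕ, (∀ i, b i ≤ t) →
        (∑ i, (q : ℝ) ^ (-(b i : ℤ))) ≤ L →
        n₀ * fl + ((d : ℤ) - n₀) * cl ≤ ∑ i, (b i : ℤ)) ∧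
    ∃ b : Fin d → ℕ,
      (∀ i : Fin d, (b i : ℤ) = if ((i : ℕ) : ℤ) < n₀ then fl else cl) ∧
      (∀ i, b i ≤ t) ∧
      (∑ i, (q : ℝ) ^ (-(b i : ℤ))) ≤ L :=
  integral_bandwidth_bound_general q t d hq L hL1 hL2 hnotint fl cl n₀ hfl hcl hn₀
end

section
/- Let B be a finite field and F a field extension of B of degree t. Let ℓ, d, k be positive integers with ℓ ≤ k ≤ ℓ + d − 1, let β_1, …, β_ℓ, α_1, …, α_d be ℓ + d pairwise distinct elements of F, let κ_1, …, κ_ℓ ∈ F be nonzero, and let C = RS({β_1,…,β_ℓ,α_1,…,α_d}, k). Set L = ( (|F| − 1)(ℓ + d − k − 1) + d ) / |F|, and suppose log_{|B|}(d/L) is not an integer; set n_0 = ⌊ (L − d·|B|^{−⌈log_{|B|}(d/L)⌉}) / (|B|^{−⌊log_{|B|}(d/L)⌋} − |B|^{−⌈log_{|B|}(d/L)⌉}) ⌋ and b_min = n_0·⌊log_{|B|}(d/L)⌋ + (d − n_0)·⌈log_{|B|}(d/L)⌉. Then every B-linear (κ, C)-weighted-sum evaluation scheme has bandwidth at least b_min: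 if g_j : F → B^{b_j} (j ∈ [d]) are B-linear maps and h : B^{b_1} × ⋯ × B^{b_d} → F is a B-linear map with h(g_1(c_{ℓ+1}), …, g_d(c_{ℓ+d})) = ∑_{i=1}^ℓ κ_i c_i for every codeword c ∈ C, then ∑_{j=1}^d b_j ≥ b_min. -/
/-!
Fix `δ ∈ F`. Transposing each component `x ↦ δ · h(g_j x)` through the trace form gives
`γ_j(δ) ∈ F`, `B`-linear in `δ`, such that `(δ κ, -γ(δ))` is orthogonal to the Reed–Solomon
code. A nonzero vector orthogonal to `RS(k)` has more than `k` nonzero entries, so for `δ ≠ 0`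
at most `ℓ + d - k - 1` of the `γ_j(δ)` vanish. On the other hand `γ_j` has rank at most `b_j`,
so it vanishes at at least `|F| / |B|^{b_j}` points `δ`. Counting the pairs `(j, δ)` with
`γ_j(δ) = 0` in both ways gives `∑_j |B|^{-b_j} ≤ L`. Finally `b ↦ |B|^{-b}` is convex, so at
every integer it lies above its secant through `⌊log_{|B|}(d/L)⌋` and `⌈log_{|B|}(d/L)⌉`;
summing these secant bounds turns `∑_j |B|^{-b_j} ≤ L` into `∑_j b_j ≥ b_min`.
-/

open Finset Polynomial Module

theorem lt_card_filter_ne_zero_of_sum_mul_eval_eq_zero {F ι : Type*} [Field F] [DecidableEq F]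
    [Fintype ι] [DecidableEq ι] {v : ι → F} (hv : Function.Injective v) {k : ℕ} {w : ι → F}
    (hw0 : w ≠ 0)
    (hw : ∀ f : F[X], f.degree < k → ∑ r, w r * f.eval (v r) = 0) :
    k < #{r | w r ≠ 0} := by
  obtain ⟨r, hr⟩ := Function.ne_iff.mp hw0
  set S : Finset ι := {r | w r ≠ 0}
  have hrS : r ∈ S := by simpa [S] using hr
  by_contra! hS
  -- the nodal polynomial of `S \ {r}` isolates the entry `w r`
  set f := Lagrange.nodal (S.erase r) v
  have hdeg : f.degree < k := by
    rw [Lagrange.degree_nodal, card_erase_of_mem hrS]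
    have := card_pos.mpr ⟨r, hrS⟩
    exact_mod_cast (by omega : #S - 1 < k)
  have hfr : f.eval (v r) ≠ 0 :=
    Lagrange.eval_nodal_not_at_node fun i hi => hv.ne (ne_of_mem_erase hi).symm
  refine mul_ne_zero hr hfr ?_
  rw [← hw f hdeg, sum_eq_single r _ (by simp)]
  intro x _ hxr
  by_cases hx : w x = 0
  · rw [hx, zero_mul]
  · rw [Lagrange.eval_nodal_at_node (mem_erase.mpr ⟨hxr, by simpa [S] using hx⟩), mul_zero]

theorem card_eq_card_pow_finrank_range_mul_card_filter_eq_zero {K V W : Type*} [Field K]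
    [Fintype K] [AddCommGroup V] [Module K V] [Fintype V] [AddCommGroup W] [Module K W]
    [DecidableEq W]
    (f : V →ₗ[K] W) : Fintype.card V =
      Fintype.card K ^ finrank K (LinearMap.range f) * #{x | f x = 0} := by
  classical
  have hker : #{x | f x = 0} = Fintype.card (LinearMap.ker f) := by
    rw [← Fintype.card_subtype]
    exact Fintype.card_congr (Equiv.subtypeEquivRight fun x => LinearMap.mem_ker.symm)
  rw [hker, Module.card_eq_pow_finrank (K := K) (V := LinearMap.ker f), ← pow_add,
    LinearMap.finrank_range_add_finrank_ker, Module.card_eq_pow_finrank (K := K)]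

theorem LinearMap.BilinForm.finrank_range_leftAdjointOfNondegenerate_le {K V : Type*} [Field K]
    [AddCommGroup V] [Module K V] [FiniteDimensional K V] (B : LinearMap.BilinForm K V)
    (hB : B.Nondegenerate) (φ : V →ₗ[K] V) :
    finrank K (LinearMap.range (B.leftAdjointOfNondegenerate hB φ)) ≤
      finrank K (LinearMap.range φ) := by
  have : B.leftAdjointOfNondegenerate hB φ =
      (B.toDual hB).symm.toLinearMap ∘ₗ φ.dualMap ∘ₗ B := rfl
  rw [this, LinearMap.range_comp, LinearEquiv.finrank_map_eq,
    ← φ.finrank_range_dualMap_eq_finrank_range]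
  exact Submodule.finrank_mono (LinearMap.range_comp_le_range _ _)

theorem finrank_range_comp_le_finrank {K U V W : Type*} [Field K] [AddCommGroup U] [Module K U]
    [AddCommGroup V] [Module K V] [FiniteDimensional K V] [AddCommGroup W] [Module K W]
    (f : V →ₗ[K] W) (g : U →ₗ[K] V) :
    finrank K (LinearMap.range (f ∘ₗ g)) ≤ finrank K V := by
  rw [LinearMap.range_comp]
  exact (Submodule.finrank_map_le f _).trans (Submodule.finrank_le _)

theorem sum_card_filter_le_of_forall_ne {α ι : Type*} [Fintype α] [DecidableEq α] [Fintype ι]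
    (P : ι → α → Prop) [∀ j x, Decidable (P j x)] (a : α) {m : ℕ}
    (hm : ∀ x ≠ a, #{j | P j x} ≤ m) :
    ∑ j, #{x | P j x} ≤ Fintype.card ι + (Fintype.card α - 1) * m :=
  calc ∑ j, #{x | P j x} = ∑ x, #{j | P j x} := by simp only [card_filter]; exact sum_comm
    _ = #{j | P j a} + ∑ x ∈ univ.erase a, #{j | P j x} := (add_sum_erase _ _ (mem_univ a)).symm
    _ ≤ Fintype.card ι + #(univ.erase a) * m := by
        gcongr
        · exact card_le_univ _
        · exact sum_le_card_nsmul _ _ _ fun x hx => hm x (ne_of_mem_erase hx)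
    _ = Fintype.card ι + (Fintype.card α - 1) * m := by
        rw [card_erase_of_mem (mem_univ a), card_univ]

section TraceAdjoint

variable {B F : Type*} [Field B] [Field F] [Algebra B F] [FiniteDimensional B F]
  [Algebra.IsSeparable B F]

noncomputable def traceAdjoint (T : F →ₗ[B] F) : F →ₗ[B] F :=
  (Algebra.traceForm B F).leftAdjointOfNondegenerate (traceForm_nondegenerate B F) T

theorem trace_traceAdjoint_mul (T : F →ₗ[B] F) (δ x : F) :
    Algebra.trace B F (traceAdjoint T δ * x) = Algebra.trace B F (δ * T x) :=
  (Algebra.traceForm B F).isAdjointPairLeftAdjointOfNondegenerate _ T δ x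

theorem mul_eq_sum_traceAdjoint_mul {ι : Type*} [Fintype ι] {T : ι → F →ₗ[B] F}
    {y : ι → F} {z : F} (hz : ∀ c : F, ∑ j, T j (c * y j) = c * z) (δ : F) :
    δ * z = ∑ j, traceAdjoint (T j) δ * y j := by
  rw [← sub_eq_zero]
  refine (traceForm_nondegenerate B F).1 _ fun c => ?_
  have hc : Algebra.trace B F (δ * z * c) =
      ∑ j, Algebra.trace B F (traceAdjoint (T j) δ * y j * c) := by
    simp_rw [mul_assoc, trace_traceAdjoint_mul, mul_comm (y _) c, ← map_sum, ← mul_sum, hz,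
      mul_comm z c]
  rw [Algebra.traceForm_apply, sub_mul, map_sub, hc, sum_mul, map_sum, sub_self]

end TraceAdjoint

theorem card_filter_traceAdjoint_eq_zero_le {B F : Type*} [Field B] [Field F] [DecidableEq F]
    [Algebra B F] [FiniteDimensional B F] [Algebra.IsSeparable B F] {ℓ d k : ℕ} (hℓ : 0 < ℓ)
    {β : Fin ℓ → F} {α : Fin d → F} (hinj : Function.Injective (Sum.elim β α))
    {κ : Fin ℓ → F} (hκ : ∀ i, κ i ≠ 0) {V : Fin d → Type*} [∀ j, AddCommGroup (V j)]
    [∀ j, Module B (V j)] {g : (j : Fin d) → (F →ₗ[B] V j)} {h : ((j : Fin d) → V j) →ₗ[B] F}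
    (hscheme : ∀ f : F[X], f.degree < (k : WithBot ℕ) →
      h (fun j => g j (f.eval (α j))) = ∑ i, κ i * f.eval (β i))
    {δ : F} (hδ : δ ≠ 0) :
    #{j | traceAdjoint (h ∘ₗ LinearMap.single B V j ∘ₗ g j) δ = 0} ≤ ℓ + d - k - 1 := by
  set γ : Fin d → F := fun j => traceAdjoint (h ∘ₗ LinearMap.single B V j ∘ₗ g j) δ
  have hdual : ∀ f : F[X], f.degree < k →
      δ * ∑ i, κ i * f.eval (β i) = ∑ j, γ j * f.eval (α j) := by
    intro f hf
    refine mul_eq_sum_traceAdjoint_mul (fun c => ?_) δ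
    have hcf := hscheme (c • f) ((degree_smul_le c f).trans_lt hf)
    simp only [eval_smul, smul_eq_mul] at hcf
    simp only [LinearMap.comp_apply, ← map_sum, LinearMap.single_apply, univ_sum_single, hcf,
      mul_sum, mul_left_comm c]
  -- `(δ κ, -γ)` is orthogonal to the Reed–Solomon code, hence has more than `k` nonzero entries
  set w : Fin ℓ ⊕ Fin d → F := Sum.elim (fun i => δ * κ i) (fun j => -γ j)
  have hw : ∀ f : F[X], f.degree < k → ∑ r, w r * f.eval (Sum.elim β α r) = 0 := by
    intro f hf
    simp [w, Fintype.sum_sum_type, ← mul_sum, hdual f hf, mul_assoc]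
  have hw0 : w ≠ 0 := fun h0 => mul_ne_zero hδ (hκ ⟨0, hℓ⟩) (congrFun h0 (.inl ⟨0, hℓ⟩))
  have hsupp := lt_card_filter_ne_zero_of_sum_mul_eval_eq_zero hinj hw0 hw
  have hsupp_eq : #{r | w r ≠ 0} = ℓ + #{j | ¬γ j = 0} := by
    simp [w, card_filter, Fintype.sum_sum_type, hδ, hκ]
  have hsplit := card_filter_add_card_filter_not (s := univ) (fun j => γ j = 0)
  rw [card_univ, Fintype.card_fin] at hsplit
  change #{j | γ j = 0} ≤ _
  omega

theorem sum_zpow_neg_bandwidth_le {B F : Type*} [Field B] [Fintype B] [Field F]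
    [Fintype F] [Algebra B F] {ℓ d k : ℕ} (hℓ : 0 < ℓ) (hkℓd : k ≤ ℓ + d - 1)
    {β : Fin ℓ → F} {α : Fin d → F} (hinj : Function.Injective (Sum.elim β α))
    {κ : Fin ℓ → F} (hκ : ∀ i, κ i ≠ 0) {b : Fin d → ℕ}
    {g : (j : Fin d) → (F →ₗ[B] (Fin (b j) → B))} {h : ((j : Fin d) → (Fin (b j) → B)) →ₗ[B] F}
    (hscheme : ∀ f : F[X], f.degree < (k : WithBot ℕ) →
      h (fun j => g j (f.eval (α j))) = ∑ i, κ i * f.eval (β i)) :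
    ∑ j, (Fintype.card B : ℝ) ^ (-(b j : ℤ)) ≤
      ((Fintype.card F - 1) * ((ℓ : ℝ) + d - k - 1) + d) / Fintype.card F := by
  classical
  set γ : Fin d → F →ₗ[B] F := fun j => traceAdjoint (h ∘ₗ LinearMap.single B _ j ∘ₗ g j)
  have hker : ∀ j, Fintype.card F ≤ Fintype.card B ^ b j * #{δ | γ j δ = 0} := by
    intro j
    rw [card_eq_card_pow_finrank_range_mul_card_filter_eq_zero (γ j)]
    gcongr
    · exact Fintype.card_pos
    · calc finrank B (LinearMap.range (γ j))
          ≤ finrank B (LinearMap.range (h ∘ₗ LinearMap.single B _ j ∘ₗ g j)) :=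
            LinearMap.BilinForm.finrank_range_leftAdjointOfNondegenerate_le _ _ _
        _ ≤ b j := by
            have := finrank_range_comp_le_finrank (h ∘ₗ LinearMap.single B _ j) (g j)
            rwa [Module.finrank_fin_fun] at this
  have hcount : ∑ j, #{δ | γ j δ = 0} ≤ d + (Fintype.card F - 1) * (ℓ + d - k - 1) := by
    simpa using sum_card_filter_le_of_forall_ne (fun j δ => γ j δ = 0) 0
      fun δ hδ => card_filter_traceAdjoint_eq_zero_le hℓ hinj hκ hscheme hδ
  have hF : (0 : ℝ) < Fintype.card F := by exact_mod_cast Fintype.card_pos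
  rw [le_div_iff₀ hF, sum_mul]
  calc ∑ j, (Fintype.card B : ℝ) ^ (-(b j : ℤ)) * Fintype.card F
      ≤ ∑ j, (#{δ | γ j δ = 0} : ℝ) := by
        gcongr with j
        rw [zpow_neg, zpow_natCast, inv_mul_le_iff₀ (by positivity)]
        exact_mod_cast hker j
    _ ≤ ((d + (Fintype.card F - 1) * (ℓ + d - k - 1) : ℕ) : ℝ) := by exact_mod_cast hcount
    _ = (Fintype.card F - 1) * ((ℓ : ℝ) + d - k - 1) + d := by
        rw [Nat.cast_add, Nat.cast_mul, Nat.cast_sub Fintype.card_pos, Nat.cast_sub (by omega),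
          Nat.cast_sub (by omega)]
        push_cast
        ring

theorem one_add_mul_sub_one_le_zpow_s12 {x : ℝ} (hx : 0 < x) (m : ℤ) :
    1 + m * (x - 1) ≤ x ^ m := by
  obtain ⟨n, rfl | rfl⟩ := Int.eq_nat_or_neg m
  · simpa using one_add_mul_le_pow (a := x - 1) (by linarith) n
  · have hinv : 1 - x ≤ x⁻¹ - 1 := by
      field_simp
      nlinarith [sq_nonneg (x - 1)]
    have := one_add_mul_le_pow (a := x⁻¹ - 1) (by linarith [inv_pos.mpr hx]) n
    rw [add_sub_cancel] at this
    rw [zpow_neg, zpow_natCast, ← inv_pow, Int.cast_neg, Int.cast_natCast]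
    nlinarith [mul_le_mul_of_nonneg_left hinv (Nat.cast_nonneg (α := ℝ) n)]

theorem secant_le_zpow_neg {s : ℝ} (hs : 0 < s) (f b : ℤ) :
    s ^ (-f) + (f - b) * (s ^ (-f) - s ^ (-(f + 1))) ≤ s ^ (-b) := by
  have key := mul_le_mul_of_nonneg_left (one_add_mul_sub_one_le_zpow_s12 (inv_pos.mpr hs) (b - f))
    (zpow_pos hs (-f)).le
  have e1 : s ^ (-f) * s⁻¹ ^ (b - f) = s ^ (-b) := by
    rw [inv_zpow', ← zpow_add₀ hs.ne']; ring_nf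
  have e2 : s ^ (-f) * s⁻¹ = s ^ (-(f + 1)) := by
    rw [← zpow_neg_one, ← zpow_add₀ hs.ne']; ring_nf
  rw [e1] at key
  push_cast at key
  linear_combination key + ((f : ℝ) - b) * e2

theorem le_sum_of_sum_zpow_neg_le {ι : Type*} [Fintype ι] {s L : ℝ} (hs : 1 < s) (f n₀ : ℤ)
    (b : ι → ℤ) (hsum : ∑ j, s ^ (-b j) ≤ L)
    (hn₀ : n₀ = ⌊(L - Fintype.card ι * s ^ (-(f + 1))) / (s ^ (-f) - s ^ (-(f + 1)))⌋) :
    n₀ * f + (Fintype.card ι - n₀) * (f + 1) ≤ ∑ j, b j := by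
  set D := s ^ (-f) - s ^ (-(f + 1))
  have hD : 0 < D := sub_pos.mpr (zpow_lt_zpow_right₀ hs (by omega))
  have hsecant : Fintype.card ι * s ^ (-f) + (Fintype.card ι * f - ∑ j, (b j : ℝ)) * D ≤ L :=
    calc _ = ∑ j, (s ^ (-f) + (f - b j) * D) := by
          simp only [sum_add_distrib, ← sum_mul, sum_sub_distrib, sum_const, card_univ,
            nsmul_eq_mul]
      _ ≤ ∑ j, s ^ (-b j) := sum_le_sum fun j _ => secant_le_zpow_neg (by linarith) f (b j)
      _ ≤ L := hsum
  have hfloor : L - Fintype.card ι * s ^ (-(f + 1)) < (n₀ + 1) * D := by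
    rw [← div_lt_iff₀ hD, hn₀]; exact Int.lt_floor_add_one _
  have hreal : (Fintype.card ι * (f + 1) - n₀ - 1 : ℝ) < ∑ j, (b j : ℝ) := by
    by_contra! hle
    nlinarith [mul_le_mul_of_nonneg_right hle hD.le]
  have hint : (Fintype.card ι : ℤ) * (f + 1) - n₀ - 1 < ∑ j, b j := by exact_mod_cast hreal
  linarith

theorem weighted_sum_bandwidth_lower_bound_general {B F : Type*} [Field B] [Fintype B]
    [Field F] [Fintype F] [Algebra B F]
    (ℓ d k : ℕ) (hℓ : 0 < ℓ)
    (hkℓd : k ≤ ℓ + d - 1)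
    (β : Fin ℓ → F) (α : Fin d → F)
    (hinj : Function.Injective (Sum.elim β α))
    (κ : Fin ℓ → F) (hκ : ∀ i, κ i ≠ 0)
    (L : ℝ)
    (hL : L = (((Fintype.card F : ℝ) - 1) * ((ℓ : ℝ) + d - k - 1) + d) /
      (Fintype.card F : ℝ))
    (hnotint : ¬ ∃ z : ℤ, Real.logb (Fintype.card B) ((d : ℝ) / L) = z)
    (fl cl n₀ : ℤ)
    (hfl : fl = ⌊Real.logb (Fintype.card B) ((d : ℝ) / L)⌋)
    (hcl : cl = ⌈Real.logb (Fintype.card B) ((d : ℝ) / L)⌉)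
    (hn₀ : n₀ = ⌊(L - (d : ℝ) * (Fintype.card B : ℝ) ^ (-cl)) /
      ((Fintype.card B : ℝ) ^ (-fl) - (Fintype.card B : ℝ) ^ (-cl))⌋)
    (b : Fin d → ℕ)
    (g : (j : Fin d) → (F →ₗ[B] (Fin (b j) → B)))
    (h : ((j : Fin d) → (Fin (b j) → B)) →ₗ[B] F)
    (hscheme : ∀ f : Polynomial F, f.degree < (k : WithBot ℕ) →
      h (fun j => g j (f.eval (α j))) = ∑ i, κ i * f.eval (β i)) :
    n₀ * fl + ((d : ℤ) - n₀) * cl ≤ ∑ j, (b j : ℤ) := by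
  have hcl' : cl = fl + 1 := by
    rw [hcl, hfl, Int.ceil_eq_floor_add_one_iff_notMem]
    exact fun ⟨z, hz⟩ => hnotint ⟨z, hz.symm⟩
  subst hcl'
  have hsum := hL ▸ sum_zpow_neg_bandwidth_le hℓ hkℓd hinj hκ hscheme
  have hB : (1 : ℝ) < Fintype.card B := by exact_mod_cast Fintype.one_lt_card
  simpa using le_sum_of_sum_zpow_neg_le hB fl n₀ (fun j => (b j : ℤ)) hsum (by simpa using hn₀)

/-- The lower bound on the evaluation bandwidth (Theorem 2): every `B`-linear
weighted-sum evaluation scheme for the Reed–Solomon code on the distinct points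
`β_1,…,β_ℓ,α_1,…,α_d` has bandwidth `∑_j b_j ≥ b_min`, where, with
`L = ((|F|-1)(ℓ+d-k-1)+d)/|F|` (and `log_{|B|}(d/L)` not an integer),
`n₀ = ⌊(L - d|B|^{-⌈log_{|B|}(d/L)⌉}) / (|B|^{-⌊log_{|B|}(d/L)⌋} - |B|^{-⌈log_{|B|}(d/L)⌉})⌋`
and `b_min = n₀⌊log_{|B|}(d/L)⌋ + (d - n₀)⌈log_{|B|}(d/L)⌉`. -/
theorem weighted_sum_bandwidth_lower_bound {B F : Type*} [Field B] [Fintype B]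
    [Field F] [Fintype F] [Algebra B F]
    (t : ℕ) (ht : Module.finrank B F = t)
    (ℓ d k : ℕ) (hℓ : 0 < ℓ) (hd : 0 < d) (hk : 0 < k)
    (hℓk : ℓ ≤ k) (hkℓd : k ≤ ℓ + d - 1)
    (β : Fin ℓ → F) (α : Fin d → F)
    (hinj : Function.Injective (Sum.elim β α))
    (κ : Fin ℓ → F) (hκ : ∀ i, κ i ≠ 0)
    (L : ℝ)
    (hL : L = (((Fintype.card F : ℝ) - 1) * ((ℓ : ℝ) + d - k - 1) + d) /
      (Fintype.card F : ℝ))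
    (hnotint : ¬ ∃ z : ℤ, Real.logb (Fintype.card B) ((d : ℝ) / L) = z)
    (fl cl n₀ : ℤ)
    (hfl : fl = ⌊Real.logb (Fintype.card B) ((d : ℝ) / L)⌋)
    (hcl : cl = ⌈Real.logb (Fintype.card B) ((d : ℝ) / L)⌉)
    (hn₀ : n₀ = ⌊(L - (d : ℝ) * (Fintype.card B : ℝ) ^ (-cl)) /
      ((Fintype.card B : ℝ) ^ (-fl) - (Fintype.card B : ℝ) ^ (-cl))⌋)
    (b : Fin d → ℕ)
    (g : (j : Fin d) → (F →ₗ[B] (Fin (b j) → B)))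
    (h : ((j : Fin d) → (Fin (b j) → B)) →ₗ[B] F)
    (hscheme : ∀ f : Polynomial F, f.degree < (k : WithBot ℕ) →
      h (fun j => g j (f.eval (α j))) = ∑ i, κ i * f.eval (β i)) :
    n₀ * fl + ((d : ℤ) - n₀) * cl ≤ ∑ j, (b j : ℤ) :=
  weighted_sum_bandwidth_lower_bound_general ℓ d k hℓ hkℓd β α hinj κ hκ L hL hnotint fl cl n₀ hfl
    hcl hn₀ b g h hscheme
end

section
/- Let B be a finite field, F a field extension of B of degree t, ℓ, d positive integers, C ⊆ F^{ℓ+d} an F-linear subspace, and κ_1, …, κ_ℓ ∈ F nonzero. Suppose C admits a B-linear (κ, C)-weighted-sum evaluation scheme with bandwidth b: there are B-linear maps g_j : F → B^{b_j} (j ∈ [d]) with ∑_{j=1}^d b_j = b, each b_j minimal for the map g_j (i.e., g_j is surjective onto B^{b_j}, equivalently no scheme with the same h-recovery uses fewer coordinates at node j), and a B-linear map h : B^{b_1} × ⋯ × B^{b_d} → F such that h(g_1(c_{ℓ+1}), …, g_d(c_{ℓ+d})) = ∑_{i=1}^ℓ κ_i c_i for every codeword c ∈ C. Then there exists a matrix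 M ∈ F^{(ℓ+d)×t} satisfying: (C1) for each column index m and every codeword c ∈ C, ∑_{i=1}^{ℓ+d} M[i,m]·c_i = 0; (C2) (∏_{i≠1} κ_i)·M[1,:] = ⋯ = (∏_{i≠ℓ} κ_i)·M[ℓ,:], with the t entries of this common row linearly independent over B; (C3) ∑_{j=1}^d dim_B span_B{entries of row M[ℓ+j,:]} ≤ b. -/
/-!
The trace form identifies `F` with its `B`-dual. Apply the scheme to `α • c` and pair the
output with `β ∈ F` under `Tr`: by linearity of `h`,
`Tr (β α ∑ κ_i c_i) = ∑_j ψ_j (g_j (α c_{ℓ+j}))` for `B`-linear forms `ψ_j` on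
`B^{b_j}`, and `ψ_j ∘ g_j = Tr (v_j · _)` for a unique `v_j ∈ F`. As `α` is arbitrary,
`β ∑ κ_i c_i = ∑_j v_j c_{ℓ+j}`. Letting `β` run through a `B`-basis `θ` of `F` gives the
rows `-κ_i θ` and `v_j`. Each `v_j` lies in the image of the `b_j`-dimensional dual of
`B^{b_j}` under the transpose of `g_j`, so row `ℓ + j` has `B`-rank at most `b_j`.
-/

open Finset Module

section TraceDuality

variable {B F : Type*} [Field B] [Field F] [Algebra B F] [FiniteDimensional B F]
  [Algebra.IsSeparable B F]

noncomputable def traceDualEquiv : Dual B F ≃ₗ[B] F :=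
  ((Algebra.traceForm B F).toDual (traceForm_nondegenerate B F)).symm

theorem trace_traceDualEquiv_mul (φ : Dual B F) (x : F) :
    Algebra.trace B F (traceDualEquiv φ * x) = φ x := by
  rw [← Algebra.traceForm_apply]
  exact LinearMap.BilinForm.apply_toDual_symm_apply φ x

variable (B) in
theorem eq_of_forall_trace_mul_eq {x y : F}
    (h : ∀ α, Algebra.trace B F (x * α) = Algebra.trace B F (y * α)) : x = y := by
  rw [← sub_eq_zero]
  refine (traceForm_nondegenerate B F).1 _ fun α => ?_
  rw [Algebra.traceForm_apply, sub_mul, map_sub, h, sub_self]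

variable {ι : Type*} [DecidableEq ι] {W : ι → Type*} [∀ j, AddCommGroup (W j)]
  [∀ j, Module B (W j)] (g : ∀ j, F →ₗ[B] W j) (h : (∀ j, W j) →ₗ[B] F)

/-- The entry `v_j` of the evaluation matrix of the scheme `(g, h)` in column `β`. -/
noncomputable def evalMatrixEntry (β : F) (j : ι) : F :=
  (traceDualEquiv.toLinearMap ∘ₗ (g j).dualMap)
    (Algebra.trace B F ∘ₗ LinearMap.mulLeft B β ∘ₗ h ∘ₗ LinearMap.single B W j)

theorem trace_evalMatrixEntry_mul (β : F) (j : ι) (x : F) :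
    Algebra.trace B F (evalMatrixEntry g h β j * x) =
      Algebra.trace B F (β * h (Pi.single j (g j x))) :=
  trace_traceDualEquiv_mul _ x

theorem finrank_span_evalMatrixEntry_le {κ : Type*} (β : κ → F) (j : ι)
    [FiniteDimensional B (W j)] :
    finrank B (Submodule.span B (Set.range fun m => evalMatrixEntry g h (β m) j)) ≤
      finrank B (W j) := by
  have hle : Submodule.span B (Set.range fun m => evalMatrixEntry g h (β m) j) ≤
      LinearMap.range (traceDualEquiv.toLinearMap ∘ₗ (g j).dualMap) :=
    Submodule.span_le.mpr <| Set.range_subset_iff.mpr fun m => LinearMap.mem_range_self _ _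
  calc _ ≤ finrank B (LinearMap.range (traceDualEquiv.toLinearMap ∘ₗ (g j).dualMap)) :=
        Submodule.finrank_mono hle
    _ ≤ finrank B (Dual B (W j)) := LinearMap.finrank_range_le _
    _ = finrank B (W j) := Subspace.dual_finrank_eq

theorem mul_eq_sum_evalMatrixEntry_mul [Fintype ι] (y : ι → F) (s : F)
    (hy : ∀ α, h (fun j => g j (α * y j)) = α * s) (β : F) :
    β * s = ∑ j, evalMatrixEntry g h β j * y j := by
  refine eq_of_forall_trace_mul_eq B fun α => ?_
  calc Algebra.trace B F (β * s * α)
      = Algebra.trace B F (β * h (∑ j, Pi.single j (g j (α * y j)))) := by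
        rw [Finset.univ_sum_single, hy, mul_comm α, mul_assoc]
    _ = ∑ j, Algebra.trace B F (evalMatrixEntry g h β j * (α * y j)) := by
        simp only [map_sum, mul_sum, trace_evalMatrixEntry_mul]
    _ = Algebra.trace B F ((∑ j, evalMatrixEntry g h β j * y j) * α) := by
        simp only [sum_mul, map_sum, mul_assoc, mul_comm α]

end TraceDuality

theorem scheme_to_evaluation_matrix_general {B F : Type*} [Field B] [Fintype B]
    [Field F] [Algebra B F]
    (t : ℕ) (ht : Module.finrank B F = t)
    (ℓ d : ℕ) (hℓ : 0 < ℓ)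
    (C : Submodule F ((Fin ℓ ⊕ Fin d) → F))
    (κ : Fin ℓ → F) (hκ : ∀ i, κ i ≠ 0)
    (b : Fin d → ℕ)
    (g : (j : Fin d) → (F →ₗ[B] (Fin (b j) → B)))
    (h : ((j : Fin d) → (Fin (b j) → B)) →ₗ[B] F)
    (hscheme : ∀ c ∈ C, h (fun j => g j (c (Sum.inr j))) = ∑ i, κ i * c (Sum.inl i)) :
    ∃ M : Fin ℓ ⊕ Fin d → Fin t → F,
      (∀ c ∈ C, ∀ m : Fin t, ∑ i : Fin ℓ ⊕ Fin d, M i m * c i = 0) ∧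
      (∀ i i' : Fin ℓ, ∀ m : Fin t,
        (∏ i'' ∈ Finset.univ.erase i, κ i'') * M (Sum.inl i) m =
          (∏ i'' ∈ Finset.univ.erase i', κ i'') * M (Sum.inl i') m) ∧
      LinearIndependent B (fun m : Fin t =>
        (∏ i'' ∈ Finset.univ.erase (⟨0, hℓ⟩ : Fin ℓ), κ i'') * M (Sum.inl ⟨0, hℓ⟩) m) ∧
      ∑ j : Fin d, Module.finrank B
          (Submodule.span B (Set.range fun m : Fin t => M (Sum.inr j) m))
        ≤ ∑ j, b j := by
  classical
  obtain rfl | htpos := t.eq_zero_or_pos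
  · refine ⟨0, fun _ _ m => m.elim0, fun _ _ m => m.elim0, linearIndependent_empty_type, ?_⟩
    exact (sum_le_sum fun j _ => finrank_range_le_card _).trans (by simp)
  have : FiniteDimensional B F := Module.finite_of_finrank_pos (ht ▸ htpos)
  let θ : Basis (Fin t) B F := (Module.finBasis B F).reindex (finCongr ht)
  have hprod (i : Fin ℓ) (x : F) :
      (∏ i'' ∈ univ.erase i, κ i'') * -(κ i * x) = -(∏ i'', κ i'') * x := by
    rw [mul_neg, ← mul_assoc, prod_erase_mul _ _ (mem_univ i), neg_mul]
  refine ⟨Sum.elim (fun i m => -(κ i * θ m)) (fun j m => evalMatrixEntry g h (θ m) j),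
    ?_, ?_, ?_, ?_⟩
  · intro c hc m
    have key := mul_eq_sum_evalMatrixEntry_mul g h (fun j => c (Sum.inr j))
      (∑ i, κ i * c (Sum.inl i))
      (fun α => by simpa [mul_sum, mul_left_comm α] using hscheme _ (C.smul_mem α hc)) (θ m)
    simp only [Fintype.sum_sum_type, Sum.elim_inl, Sum.elim_inr, ← key, neg_mul,
      sum_neg_distrib, mul_sum, neg_add_eq_zero]
    exact sum_congr rfl fun i _ => by ring
  · intro i i' m
    simp only [Sum.elim_inl, hprod]
  · simp only [Sum.elim_inl, hprod]
    have hne : -(∏ i'', κ i'') ≠ 0 := neg_ne_zero.mpr (prod_ne_zero_iff.mpr fun i _ => hκ i)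
    exact θ.linearIndependent.map' (LinearMap.mulLeft B _)
      (LinearMap.ker_eq_bot.mpr (mul_right_injective₀ hne))
  · simp only [Sum.elim_inr]
    exact sum_le_sum fun j _ =>
      (finrank_span_evalMatrixEntry_le g h θ j).trans_eq (finrank_fin_fun B)

/-- Necessity direction of the characterization of `B`-linear evaluation schemes
(Theorem 6): a `B`-linear weighted-sum evaluation scheme with bandwidth `b = ∑_j b_j`
(with each `g_j` surjective, i.e. each `b_j` minimal) yields a `(κ, C)`-evaluation
matrix `M` satisfying (C1), (C2), and with total `B`-rank of its last `d` rows
at most `b`. -/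
theorem scheme_to_evaluation_matrix {B F : Type*} [Field B] [Fintype B]
    [Field F] [Algebra B F]
    (t : ℕ) (ht : Module.finrank B F = t)
    (ℓ d : ℕ) (hℓ : 0 < ℓ) (hd : 0 < d)
    (C : Submodule F ((Fin ℓ ⊕ Fin d) → F))
    (κ : Fin ℓ → F) (hκ : ∀ i, κ i ≠ 0)
    (b : Fin d → ℕ)
    (g : (j : Fin d) → (F →ₗ[B] (Fin (b j) → B)))
    (hg : ∀ j, Function.Surjective (g j))
    (h : ((j : Fin d) → (Fin (b j) → B)) →ₗ[B] F)
    (hscheme : ∀ c ∈ C, h (fun j => g j (c (Sum.inr j))) = ∑ i, κ i * c (Sum.inl i)) :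
    ∃ M : Fin ℓ ⊕ Fin d → Fin t → F,
      (∀ c ∈ C, ∀ m : Fin t, ∑ i : Fin ℓ ⊕ Fin d, M i m * c i = 0) ∧
      (∀ i i' : Fin ℓ, ∀ m : Fin t,
        (∏ i'' ∈ Finset.univ.erase i, κ i'') * M (Sum.inl i) m =
          (∏ i'' ∈ Finset.univ.erase i', κ i'') * M (Sum.inl i') m) ∧
      LinearIndependent B (fun m : Fin t =>
        (∏ i'' ∈ Finset.univ.erase (⟨0, hℓ⟩ : Fin ℓ), κ i'') * M (Sum.inl ⟨0, hℓ⟩) m) ∧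
      ∑ j : Fin d, Module.finrank B
          (Submodule.span B (Set.range fun m : Fin t => M (Sum.inr j) m))
        ≤ ∑ j, b j :=
  scheme_to_evaluation_matrix_general t ht ℓ d hℓ C κ hκ b g h hscheme
end
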